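/- The monotonicity of Λ: Λ_{n+1} ≥ Λ_n, where Λ_n is the minimum over all LC orbits of connected simple graphs on n vertices of the maximum independence number attained over the orbit. -/

import Mathlib

/-- Local complementation at a vertex `v`: toggle each edge between distinct
neighbours of `v`, keeping all other adjacencies unchanged. -/
def localComp {V : Type*} (G : SimpleGraph V) (v : V) : SimpleGraph V where
  Adj a b := Xor' (G.Adj a b) (a ≠ b ∧ G.Adj v a ∧ G.Adj v b)
  symm := by
    constructor
    intro a b h
    rcases h with ⟨h1, h2⟩ | ⟨h1, h2⟩
    · exact Or.inl ⟨h1.symm, fun ⟨hne, ha, hb⟩ => h2 ⟨hne.symm, hb, ha⟩⟩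
    · exact Or.inr ⟨⟨h1.1.symm, h1.2.2, h1.2.1⟩, fun hg => h2 hg.symm⟩
  loopless := by
    constructor
    intro a h
    rcases h with ⟨h1, _⟩ | ⟨⟨h1, _⟩, _⟩
    · exact G.irrefl h1
    · exact h1 rfl

/-- One step of LC-equivalence: either a local complementation at some vertex, or a
graph isomorphism (relabelling of the vertices). -/
inductive LCStep {V : Type} : SimpleGraph V → SimpleGraph V → Prop
  | lc (G : SimpleGraph V) (v : V) : LCStep G (localComp G v)
  | iso (G G' : SimpleGraph V) (e : G ≃g G') : LCStep G G'

/-- LC-equivalence: the reflexive-transitive closure of local complementations and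
isomorphisms. -/
def LCEquiv {V : Type} (G G' : SimpleGraph V) : Prop :=
  Relation.ReflTransGen LCStep G G'

/-- The independence number of a finite graph: the largest size of a set of pairwise
non-adjacent vertices. -/
noncomputable def indepNum {V : Type} [Fintype V] (G : SimpleGraph V) : ℕ :=
  sSup {k | ∃ s : Finset V, s.card = k ∧ ∀ a ∈ s, ∀ b ∈ s, a ≠ b → ¬ G.Adj a b}

/-- λ(G): the maximum independence number attained over the LC orbit of G. -/
noncomputable def lambdaLC {V : Type} [Fintype V] (G : SimpleGraph V) : ℕ :=
  sSup {k | ∃ K : SimpleGraph V, LCEquiv G K ∧ indepNum K = k}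

/-- Λ_n: the minimum of λ over all LC orbits of connected simple graphs on n
vertices. -/
noncomputable def LambdaMin (n : ℕ) : ℕ :=
  sInf {k | ∃ G : SimpleGraph (Fin n), G.Connected ∧ lambdaLC G = k}

/-! ### Auxiliary lemmas -/

open SimpleGraph

lemma localComp_adj {V : Type*} (G : SimpleGraph V) (v a b : V) :
    (localComp G v).Adj a b ↔ Xor' (G.Adj a b) (a ≠ b ∧ G.Adj v a ∧ G.Adj v b) :=
  Iff.rfl

lemma indepSet_nonempty {V : Type} [Fintype V] (G : SimpleGraph V) :
    (0 : ℕ) ∈ {k | ∃ s : Finset V, s.card = k ∧ ∀ a ∈ s, ∀ b ∈ s, a ≠ b → ¬ G.Adj a b} :=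
  ⟨∅, by simp⟩

lemma indepSet_bddAbove {V : Type} [Fintype V] (G : SimpleGraph V) :
    BddAbove {k | ∃ s : Finset V, s.card = k ∧ ∀ a ∈ s, ∀ b ∈ s, a ≠ b → ¬ G.Adj a b} := by
  refine ⟨Fintype.card V, ?_⟩
  rintro k ⟨s, rfl, -⟩
  exact s.card_le_univ

lemma indepNum_le_card {V : Type} [Fintype V] (G : SimpleGraph V) :
    _root_.indepNum G ≤ Fintype.card V := by
  apply csSup_le ⟨0, indepSet_nonempty G⟩
  rintro k ⟨s, rfl, -⟩
  exact s.card_le_univ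

lemma lambdaSet_nonempty {V : Type} [Fintype V] (G : SimpleGraph V) :
    _root_.indepNum G ∈ {k | ∃ K : SimpleGraph V, LCEquiv G K ∧ _root_.indepNum K = k} :=
  ⟨G, Relation.ReflTransGen.refl, rfl⟩

lemma lambdaSet_bddAbove {V : Type} [Fintype V] (G : SimpleGraph V) :
    BddAbove {k | ∃ K : SimpleGraph V, LCEquiv G K ∧ _root_.indepNum K = k} := by
  refine ⟨Fintype.card V, ?_⟩
  rintro k ⟨K, -, rfl⟩
  exact indepNum_le_card K

/-- The induced subgraph of a graph on `Fin (n+1)` obtained by deleting the last vertex. -/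
noncomputable def delLast {n : ℕ} (K : SimpleGraph (Fin (n + 1))) : SimpleGraph (Fin n) :=
  K.comap Fin.castSucc

lemma delLast_adj {n : ℕ} (K : SimpleGraph (Fin (n + 1))) (a b : Fin n) :
    (delLast K).Adj a b ↔ K.Adj a.castSucc b.castSucc := Iff.rfl

/-- Deleting the last vertex commutes with local complementation at a non-last vertex. -/
lemma delLast_localComp {n : ℕ} (K : SimpleGraph (Fin (n + 1))) (w : Fin n) :
    delLast (localComp K w.castSucc) = localComp (delLast K) w := by
  ext a b
  have hne : a.castSucc ≠ b.castSucc ↔ a ≠ b := by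
    constructor
    · exact fun h h' => h (by rw [h'])
    · exact fun h h' => h (Fin.castSucc_injective n h')
  simp only [delLast_adj, localComp_adj, hne]

/-- Extend a permutation of `Fin n` to `Fin (n+1)` fixing the last vertex. -/
def extPerm {n : ℕ} (p : Equiv.Perm (Fin n)) : Equiv.Perm (Fin (n + 1)) where
  toFun := Fin.lastCases (Fin.last n) (fun i => (p i).castSucc)
  invFun := Fin.lastCases (Fin.last n) (fun i => (p.symm i).castSucc)
  left_inv := by
    intro x
    cases x using Fin.lastCases with
    | last => simp
    | cast i => simp
  right_inv := by
    intro x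
    cases x using Fin.lastCases with
    | last => simp
    | cast i => simp

@[simp] lemma extPerm_castSucc {n : ℕ} (p : Equiv.Perm (Fin n)) (i : Fin n) :
    extPerm p i.castSucc = (p i).castSucc := by
  simp [extPerm]

@[simp] lemma extPerm_symm_castSucc {n : ℕ} (p : Equiv.Perm (Fin n)) (i : Fin n) :
    (extPerm p).symm i.castSucc = (p.symm i).castSucc := by
  rw [Equiv.symm_apply_eq, extPerm_castSucc, Equiv.apply_symm_apply]

/-- An isomorphism of deleted graphs lifts to an LC step on the ambient graph. -/
lemma lift_iso {n : ℕ} (A' : SimpleGraph (Fin (n + 1))) (B : SimpleGraph (Fin n))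
    (e : delLast A' ≃g B) :
    ∃ B' : SimpleGraph (Fin (n + 1)), LCStep A' B' ∧ delLast B' = B := by
  set p : Equiv.Perm (Fin (n + 1)) := extPerm e.toEquiv with hp
  refine ⟨A'.comap ⇑p.symm, LCStep.iso _ _ ⟨p, ?_⟩, ?_⟩
  · intro a b
    show A'.Adj (p.symm (p a)) (p.symm (p b)) ↔ A'.Adj a b
    simp
  · ext a b
    show A'.Adj (p.symm a.castSucc) (p.symm b.castSucc) ↔ B.Adj a b
    rw [hp, extPerm_symm_castSucc, extPerm_symm_castSucc]
    have h1 : B.Adj (e (e.toEquiv.symm a)) (e (e.toEquiv.symm b)) ↔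
        (delLast A').Adj (e.toEquiv.symm a) (e.toEquiv.symm b) := e.map_rel_iff
    rw [delLast_adj] at h1
    rw [← h1]
    show B.Adj (e.toEquiv (e.toEquiv.symm a)) (e.toEquiv (e.toEquiv.symm b)) ↔ B.Adj a b
    rw [Equiv.apply_symm_apply, Equiv.apply_symm_apply]

/-- LC-equivalence lifts from a deleted graph to the ambient graph: each graph
LC-equivalent to `delLast G'` is the deletion of a graph LC-equivalent to `G'`. -/
lemma lift_lcequiv {n : ℕ} (G' : SimpleGraph (Fin (n + 1))) (K : SimpleGraph (Fin n))
    (h : LCEquiv (delLast G') K) :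
    ∃ K' : SimpleGraph (Fin (n + 1)), LCEquiv G' K' ∧ delLast K' = K := by
  induction h with
  | refl => exact ⟨G', Relation.ReflTransGen.refl, rfl⟩
  | tail hsteps hstep ih =>
    obtain ⟨A', hA', hdel⟩ := ih
    cases hstep with
    | lc w =>
      refine ⟨localComp A' w.castSucc, hA'.tail (LCStep.lc _ _), ?_⟩
      rw [delLast_localComp, hdel]
    | iso _ e =>
      obtain ⟨B', hstep', hdel'⟩ := lift_iso A' _ (hdel.symm ▸ e)
      exact ⟨B', hA'.tail hstep', hdel'⟩

/-- Independent sets survive deletion: the independence number of a deleted graph is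
at most that of the ambient graph. -/
lemma indepNum_delLast_le {n : ℕ} (K : SimpleGraph (Fin (n + 1))) :
    _root_.indepNum (delLast K) ≤ _root_.indepNum K := by
  apply csSup_le ⟨0, indepSet_nonempty _⟩
  rintro k ⟨s, rfl, hs⟩
  apply le_csSup (indepSet_bddAbove K)
  refine ⟨s.map ⟨Fin.castSucc, Fin.castSucc_injective n⟩, by simp, ?_⟩
  intro a ha b hb hne hadj
  rw [Finset.mem_map] at ha hb
  obtain ⟨a, ha, rfl⟩ := ha
  obtain ⟨b, hb, rfl⟩ := hb
  exact hs a ha b hb (fun h => hne (by rw [h])) hadj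

/-- A connected finite graph with more than one vertex has a vertex whose deletion
leaves the graph connected. -/
lemma exists_del_connected {V : Type} [Fintype V] [DecidableEq V] (G : SimpleGraph V)
    (hG : G.Connected) (hcard : 1 < Fintype.card V) :
    ∃ v : V, (G.comap (Subtype.val : {x : V // x ≠ v} → V)).Connected := by
  obtain ⟨u⟩ := hG.nonempty
  have : Nonempty V := ⟨u⟩
  obtain ⟨v, hv⟩ := Finite.exists_max (G.dist u)
  -- v ≠ u since some vertex has positive distance from u
  have hvu : u ≠ v := by
    obtain ⟨w, hw⟩ := Fintype.exists_ne_of_one_lt_card hcard u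
    have h1 : 0 < G.dist u w := hG.pos_dist_of_ne (Ne.symm hw)
    have h2 : 0 < G.dist u v := lt_of_lt_of_le h1 (hv w)
    intro h; rw [← h, SimpleGraph.dist_self] at h2; exact Nat.lt_irrefl 0 h2
  refine ⟨v, ?_⟩
  -- walks from u realizing the distance avoid v
  have key : ∀ w, w ≠ v → ∃ p : G.Walk u w, v ∉ p.support := by
    intro w hw
    obtain ⟨p, hp⟩ := hG.exists_walk_length_eq_dist u w
    refine ⟨p, fun hvp => ?_⟩
    have h1 : G.dist u v ≤ (p.takeUntil v hvp).length := SimpleGraph.dist_le _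
    have h2 : (p.takeUntil v hvp).length + (p.dropUntil v hvp).length = p.length := by
      rw [← SimpleGraph.Walk.length_append, SimpleGraph.Walk.take_spec]
    have h3 : (p.dropUntil v hvp).length ≠ 0 := by
      intro h0
      exact hw ((SimpleGraph.Walk.eq_of_length_eq_zero h0).symm)
    have h4 : p.length ≤ G.dist u v := hp ▸ hv w
    omega
  -- transfer walks avoiding v to the deleted graph
  have walk_reach : ∀ (a b : V) (p : G.Walk a b), v ∉ p.support →
      ∀ (ha : a ≠ v) (hb : b ≠ v),
      (G.comap (Subtype.val : {x : V // x ≠ v} → V)).Reachable ⟨a, ha⟩ ⟨b, hb⟩ := by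
    intro a b p
    induction p with
    | nil => intro _ ha hb; exact SimpleGraph.Reachable.refl _
    | @cons a c b h q ih =>
      intro hp ha hb
      rw [SimpleGraph.Walk.support_cons, List.mem_cons] at hp
      push_neg at hp
      have hc : c ≠ v := fun h' => hp.2 (h' ▸ q.start_mem_support)
      have hadj : (G.comap (Subtype.val : {x : V // x ≠ v} → V)).Adj ⟨a, ha⟩ ⟨c, hc⟩ := h
      exact (hadj.reachable).trans (ih hp.2 hc hb)
  haveI : Nonempty {x : V // x ≠ v} := ⟨⟨u, hvu⟩⟩
  refine ⟨?_⟩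
  rintro ⟨a, ha⟩ ⟨b, hb⟩
  obtain ⟨p, hp⟩ := key a ha
  obtain ⟨q, hq⟩ := key b hb
  exact (walk_reach u a p hp hvu ha).symm.trans (walk_reach u b q hq hvu hb)

/-- Monotonicity of Λ: Λ_{n+1} ≥ Λ_n. -/
theorem LambdaMin_monotone (n : ℕ) : LambdaMin n ≤ LambdaMin (n + 1) := by
  cases n with
  | zero =>
    have hempty : {k | ∃ G : SimpleGraph (Fin 0), G.Connected ∧ lambdaLC G = k} = ∅ := by
      ext k
      simp only [Set.mem_setOf_eq, Set.mem_empty_iff_false, iff_false, not_exists]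
      rintro G ⟨hG, -⟩
      obtain ⟨x⟩ := hG.nonempty
      exact x.elim0
    unfold LambdaMin
    rw [hempty, Nat.sInf_empty]
    exact Nat.zero_le _
  | succ m =>
    apply le_csInf
    · exact ⟨lambdaLC (⊤ : SimpleGraph (Fin (m + 2))), ⊤, connected_top, rfl⟩
    · rintro k ⟨G, hG, rfl⟩
      -- find a deletable vertex
      have hcard : 1 < Fintype.card (Fin (m + 2)) := by simp
      obtain ⟨v, hvconn⟩ := exists_del_connected G hG hcard
      -- move v to the last position
      set σ : Equiv.Perm (Fin (m + 2)) := Equiv.swap v (Fin.last (m + 1)) with hσ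
      set G' : SimpleGraph (Fin (m + 2)) := G.comap ⇑σ with hG'
      have e0 : G' ≃g G := ⟨σ, Iff.rfl⟩
      set H : SimpleGraph (Fin (m + 1)) := delLast G' with hH
      -- the embedding of Fin (m+1) into Fin (m+2) via σ ∘ castSucc avoids v
      have hfv : ∀ i : Fin (m + 1), σ i.castSucc ≠ v := by
        intro i h
        have : i.castSucc = σ v := by
          have := congrArg σ h
          rwa [Equiv.swap_apply_self] at this
        rw [hσ, Equiv.swap_apply_left] at this
        exact absurd this (Fin.ne_last_of_lt (Fin.castSucc_lt_last i))
      -- H is isomorphic to the vertex-deleted graph, hence connected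
      have e1 : H ≃g G.comap (Subtype.val : {x : Fin (m + 2) // x ≠ v} → Fin (m + 2)) := by
        have hne : ∀ x : {x : Fin (m + 2) // x ≠ v}, σ x.val ≠ Fin.last (m + 1) := by
          rintro ⟨x, hx⟩ h
          apply hx
          have := congrArg σ h
          rwa [Equiv.swap_apply_self, hσ, Equiv.swap_apply_right] at this
        refine ⟨⟨fun i => ⟨σ i.castSucc, hfv i⟩,
          fun x => (σ x.val).castPred (hne x), ?_, ?_⟩, ?_⟩
        · intro i
          simp only
          apply Fin.castSucc_injective
          rw [Fin.castSucc_castPred, Equiv.swap_apply_self]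
        · rintro ⟨x, hx⟩
          apply Subtype.ext
          simp only
          rw [Fin.castSucc_castPred, Equiv.swap_apply_self]
        · intro a b
          exact Iff.rfl
      have hHconn : H.Connected := e1.connected_iff.mpr hvconn
      -- λ(H) ≤ λ(G)
      have hle : lambdaLC H ≤ lambdaLC G := by
        apply csSup_le ⟨_root_.indepNum H, lambdaSet_nonempty H⟩
        rintro k ⟨K, hK, rfl⟩
        obtain ⟨K', hK', hdel⟩ := lift_lcequiv G' K hK
        have h1 : _root_.indepNum K ≤ _root_.indepNum K' := by
          rw [← hdel]; exact indepNum_delLast_le K'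
        have h2 : _root_.indepNum K' ≤ lambdaLC G := by
          apply le_csSup (lambdaSet_bddAbove G)
          exact ⟨K', Relation.ReflTransGen.head (LCStep.iso G G' e0.symm) hK', rfl⟩
        exact le_trans h1 h2
      exact le_trans (Nat.sInf_le ⟨H, hHconn, rfl⟩) hle
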